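/- Fix 1 < p < ∞. For every x ∈ W^{1,p}₀[0,1], the supremum norm of x satisfies ‖x‖_∞ ≤ ‖x‖_{W^{1,p}₀}, where ‖x‖_{W^{1,p}₀} = (∫₀¹ |x'(τ)|^p dτ)^{1/p}. Moreover, if Φ : Δ × ℝ → ℝ satisfies conditions (i)–(iii) below, then the map g : W^{1,p}₀[0,1] → L^p[0,1] defined by g(x)(t) := ∫₀^t Φ(t,τ,x(τ)) dτ satisfies, for every r ≥ 0 and all u, v ∈ W^{1,p}₀[0,1] with ‖u‖_{W^{1,p}₀} ≤ r and ‖v‖_{W^{1,p}₀} ≤ r, the Lipschitz estimate ‖g(u) − g(v)‖_{L^p} ≤ θ(r)·‖u − v‖_{W^{1,p}₀}. -/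

import Mathlib

/-! Writing `x(t) = ∫₀ᵗ x'`, Hölder's inequality on the probability space `[0,1]` gives
`|x(t)| ≤ ‖x'‖_p`. So `u`, `v` take values in `[-r, r]` and `|u - v| ≤ ‖u - v‖`, and the
Lipschitz condition bounds `|Φ(t,τ,u(τ)) - Φ(t,τ,v(τ))|` by `θ(r)‖u - v‖`; integrating over
`τ ∈ [0,t] ⊆ [0,1]` and then taking the `L^p`-norm in `t` over a probability space keeps this bound.
The delicate point is measurability of `τ ↦ Φ(t,τ,u(τ))`: `Φ` is measurable in `(t,τ)` and, by
the Lipschitz condition, a.e. continuous in its last argument, i.e. a Carathéodory function. -/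

open MeasureTheory Set Filter

noncomputable section

/-- The triangle `Δ = {(t,τ) ∈ [0,1]×[0,1] : τ ≤ t}`. -/
def triangleSet : Set (ℝ × ℝ) :=
  {q : ℝ × ℝ | q.1 ∈ Icc (0 : ℝ) 1 ∧ q.2 ∈ Icc (0 : ℝ) 1 ∧ q.2 ≤ q.1}

/-- `x ∈ W^{1,p}₀[0,1]` with derivative `g`: `g ∈ L^p[0,1]` and `x(t) = ∫₀^t g(τ) dτ`
for all `t ∈ [0,1]` (in particular `x(0) = 0` and `x' = g` a.e.). -/
def InW1p0 (p : ℝ) (x g : ℝ → ℝ) : Prop :=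
  MemLp g (ENNReal.ofReal p) (volume.restrict (Icc (0 : ℝ) 1)) ∧
  ∀ t ∈ Icc (0 : ℝ) 1, x t = ∫ τ in (0 : ℝ)..t, g τ

/-- The `W^{1,p}₀`-norm of `x`, computed from its derivative `g`:
`‖x‖ = (∫₀¹ |g(τ)|^p dτ)^{1/p}`. -/
def w1pNorm (p : ℝ) (g : ℝ → ℝ) : ℝ :=
  (∫ τ in Icc (0 : ℝ) 1, |g τ| ^ p) ^ (1 / p)

/-- Condition (i): `Φ(·,·,u)` is measurable on `Δ` for every `u`. -/
def PhiMeasurable (Φ : ℝ → ℝ → ℝ → ℝ) : Prop :=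
  ∀ u : ℝ, Measurable fun q : triangleSet => Φ q.val.1 q.val.2 u

/-- Condition (ii): a growth bound `|Φ(t,τ,u)| ≤ a(t,τ)|u| + b(t,τ)` with `a, b ∈ L^p(Δ)`. -/
def PhiGrowth (p : ℝ) (Φ : ℝ → ℝ → ℝ → ℝ) : Prop :=
  ∃ a b : ℝ × ℝ → ℝ,
    MemLp a (ENNReal.ofReal p) (volume.restrict triangleSet) ∧
    MemLp b (ENNReal.ofReal p) (volume.restrict triangleSet) ∧
    ∀ᵐ q ∂(volume.restrict triangleSet),
      ∀ u : ℝ, |Φ q.1 q.2 u| ≤ a q * |u| + b q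

/-- Condition (iii): a Lipschitz estimate `|Φ(t,τ,u) − Φ(t,τ,v)| ≤ θ(r)|u−v|` for
`|u|, |v| ≤ r`, with `θ : [0,∞) → (0,1)` continuous and `∫₀^∞ (1−θ(r)) dr = ∞`. -/
def PhiLipschitz (Φ : ℝ → ℝ → ℝ → ℝ) (θ : ℝ → ℝ) : Prop :=
  ContinuousOn θ (Ici 0) ∧ (∀ r ∈ Ici (0 : ℝ), θ r ∈ Ioo (0 : ℝ) 1) ∧
  (∫⁻ r in Ioi (0 : ℝ), ENNReal.ofReal (1 - θ r) = ⊤) ∧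
  ∀ r ∈ Ici (0 : ℝ), ∀ᵐ q ∂(volume.restrict triangleSet),
    ∀ u v : ℝ, |u| ≤ r → |v| ≤ r → |Φ q.1 q.2 u - Φ q.1 q.2 v| ≤ θ r * |u - v|

/-- `x` is a solution of `x'(t) + ∫₀^t Φ(t,τ,x(τ)) dτ = y(t)` a.e. on `[0,1]`, with
`x ∈ W^{1,p}₀[0,1]` (so `x(0) = 0`). -/
def IsSolution (p : ℝ) (Φ : ℝ → ℝ → ℝ → ℝ) (y x : ℝ → ℝ) : Prop :=
  ∃ g : ℝ → ℝ, InW1p0 p x g ∧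
    ∀ᵐ t ∂(volume.restrict (Icc (0 : ℝ) 1)),
      g t + ∫ τ in (0 : ℝ)..t, Φ t τ (x τ) = y t


/-- Zeroing `F` off a measurable conull set and clamping its second argument to `[a, b]` makes
it continuous in the second variable everywhere, hence jointly measurable. -/
theorem aemeasurable_comp_of_continuousOn_Icc {α : Type*} [MeasurableSpace α] {μ : Measure α}
    {F : α → ℝ → ℝ} {w : α → ℝ} {a b : ℝ}
    (hab : a ≤ b) (hF : ∀ c, Measurable fun x => F x c)
    (hcont : ∀ᵐ x ∂μ, ContinuousOn (F x) (Icc a b))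
    (hw : AEMeasurable w μ) (hwab : ∀ᵐ x ∂μ, w x ∈ Icc a b) :
    AEMeasurable (fun x => F x (w x)) μ := by
  obtain ⟨G, hGae, hGm, hG⟩ := hcont.exists_measurable_mem
  set U : ℝ → α → ℝ := fun c => G.indicator fun x => F x (projIcc a b hab c)
  have hU : Measurable (Function.uncurry U) := by
    refine measurable_uncurry_of_continuous_of_measurable (fun x => ?_)
      fun c => (hF _).indicator hGm
    by_cases hx : x ∈ G
    · simp only [U, indicator_of_mem hx]
      exact (hG x hx).comp_continuous (continuous_subtype_val.comp continuous_projIcc)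
        fun c => (projIcc a b hab c).2
    · simp only [U, indicator_of_notMem hx]
      exact continuous_const
  refine ⟨fun x => U (hw.mk w x) x, hU.comp (hw.measurable_mk.prodMk measurable_id), ?_⟩
  filter_upwards [hGae, hw.ae_eq_mk, hwab] with x hxG hmk hxab
  simp only [U, indicator_of_mem hxG, ← hmk, projIcc_of_mem hab hxab]

section ProbabilityMeasure

variable {α : Type*} [MeasurableSpace α] {μ : Measure α} [IsProbabilityMeasure μ]
  {f : α → ℝ} {p : ℝ}

theorem integral_abs_le_integral_abs_rpow_rpow (hp : 1 < p)
    (hf : MemLp f (ENNReal.ofReal p) μ) :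
    ∫ a, |f a| ∂μ ≤ (∫ a, |f a| ^ p ∂μ) ^ (1 / p) := by
  have hf_abs : MemLp (fun a => |f a|) (ENNReal.ofReal p) μ := by
    simpa only [Real.norm_eq_abs] using hf.norm
  have hone : MemLp (fun _ => (1 : ℝ)) (ENNReal.ofReal (Real.conjExponent p)) μ := memLp_const 1
  simpa [Real.one_rpow, measure_univ] using integral_mul_le_Lp_mul_Lq_of_nonneg
    (Real.HolderConjugate.conjExponent hp) (ae_of_all _ fun a => abs_nonneg (f a))
    (ae_of_all _ fun _ => zero_le_one) hf_abs hone

theorem integral_abs_rpow_rpow_le_of_ae_abs_le (hp : 0 < p) {M : ℝ} (hM : 0 ≤ M)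
    (hfM : ∀ᵐ a ∂μ, |f a| ≤ M) :
    (∫ a, |f a| ^ p ∂μ) ^ (1 / p) ≤ M := by
  have hint : ∫ a, |f a| ^ p ∂μ ≤ M ^ p := by
    refine (integral_mono_of_nonneg (ae_of_all _ fun a => by positivity) (integrable_const _)
      (hfM.mono fun a ha => Real.rpow_le_rpow (abs_nonneg _) ha hp.le)).trans_eq ?_
    simp
  calc (∫ a, |f a| ^ p ∂μ) ^ (1 / p) ≤ (M ^ p) ^ (1 / p) := by gcongr
    _ = M := by rw [← Real.rpow_mul hM, mul_one_div_cancel hp.ne', Real.rpow_one]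

end ProbabilityMeasure

/-- No integrability is assumed: `f` and `h` are integrable together, and if they are not,
both integrals are the junk value `0`. -/
theorem abs_intervalIntegral_sub_le_of_ae_abs_sub_le {f h : ℝ → ℝ} {a b M : ℝ} (hab : a ≤ b)
    (hM : 0 ≤ M) (hf : AEStronglyMeasurable f (volume.restrict (Ioc a b)))
    (hh : AEStronglyMeasurable h (volume.restrict (Ioc a b)))
    (hfh : ∀ᵐ τ ∂(volume.restrict (Ioc a b)), |f τ - h τ| ≤ M) :
    |(∫ τ in a..b, f τ) - ∫ τ in a..b, h τ| ≤ M * (b - a) := by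
  have hdiff : IntervalIntegrable (fun τ => f τ - h τ) volume a b :=
    (intervalIntegrable_iff_integrableOn_Ioc_of_le hab).2 <|
      (integrable_const M).mono' (hf.sub hh) hfh
  by_cases hfi : IntervalIntegrable f volume a b
  · have hhi : IntervalIntegrable h volume a b := by
      simpa only [sub_sub_cancel] using hfi.sub hdiff
    rw [← intervalIntegral.integral_sub hfi hhi, ← abs_of_nonneg (sub_nonneg.2 hab)]
    refine intervalIntegral.norm_integral_le_of_norm_le_const_ae (f := fun τ => f τ - h τ) ?_
    rw [uIoc_of_le hab]
    exact (ae_restrict_iff' measurableSet_Ioc).1 hfh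
  · have hhi : ¬ IntervalIntegrable h volume a b := fun hhi =>
      hfi (by simpa only [add_sub_cancel] using hhi.add hdiff)
    rw [intervalIntegral.integral_undef hfi, intervalIntegral.integral_undef hhi, sub_self,
      abs_zero]
    exact mul_nonneg hM (sub_nonneg.2 hab)

theorem continuousOn_Icc_of_abs_sub_le {f : ℝ → ℝ} {K r : ℝ}
    (hf : ∀ a b, |a| ≤ r → |b| ≤ r → |f a - f b| ≤ K * |a - b|) :
    ContinuousOn f (Icc (-r) r) :=
  (LipschitzOnWith.of_dist_le' fun a ha b hb => by
    simpa only [Real.dist_eq] using hf a b (abs_le.2 ha) (abs_le.2 hb)).continuousOn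

instance : IsProbabilityMeasure (volume.restrict (Icc (0 : ℝ) 1)) :=
  ⟨by simp [Real.volume_Icc]⟩

theorem measurableSet_triangleSet : MeasurableSet triangleSet := by
  have : triangleSet = (Icc (0 : ℝ) 1 ×ˢ Icc (0 : ℝ) 1) ∩ {q : ℝ × ℝ | q.2 ≤ q.1} := by
    ext q
    simp only [triangleSet, mem_ofPred_eq, mem_inter_iff, mem_prod]
    tauto
  rw [this]
  exact (measurableSet_Icc.prod measurableSet_Icc).inter
    (measurableSet_le measurable_snd measurable_fst)

theorem mk_mem_triangleSet {t τ : ℝ} (ht : t ∈ Icc (0 : ℝ) 1) (hτ : τ ∈ Ioc 0 t) :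
    (t, τ) ∈ triangleSet :=
  ⟨ht, ⟨hτ.1.le, hτ.2.trans ht.2⟩, hτ.2⟩

theorem ae_slice_triangleSet {P : ℝ × ℝ → Prop}
    (h : ∀ᵐ q ∂(volume.restrict triangleSet), P q) :
    ∀ᵐ t ∂(volume.restrict (Icc (0 : ℝ) 1)), ∀ᵐ τ ∂(volume.restrict (Ioc 0 t)), P (t, τ) := by
  have h' : ∀ᵐ q ∂(volume.prod volume), q ∈ triangleSet → P q := by
    rw [← Measure.volume_eq_prod]
    exact (ae_restrict_iff' measurableSet_triangleSet).1 h
  filter_upwards [ae_restrict_of_ae (Measure.ae_ae_of_ae_prod h'),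
    self_mem_ae_restrict measurableSet_Icc] with t ht htI
  filter_upwards [ae_restrict_of_ae ht, self_mem_ae_restrict measurableSet_Ioc] with τ hτ hτI
  exact hτ (mk_mem_triangleSet htI hτI)

theorem AEStronglyMeasurable.ae_slice_triangleSet {f : ℝ × ℝ → ℝ}
    (hf : AEStronglyMeasurable f (volume.restrict triangleSet)) :
    ∀ᵐ t ∂(volume.restrict (Icc (0 : ℝ) 1)),
      AEStronglyMeasurable (fun τ => f (t, τ)) (volume.restrict (Ioc 0 t)) := by
  filter_upwards [_root_.ae_slice_triangleSet hf.ae_eq_mk] with t ht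
  exact ⟨fun τ => hf.mk f (t, τ),
    hf.stronglyMeasurable_mk.comp_measurable measurable_prodMk_left, ht⟩

theorem PhiMeasurable.ae_aestronglyMeasurable_slice {Φ : ℝ → ℝ → ℝ → ℝ}
    (hΦ : PhiMeasurable Φ) {r : ℝ} (hr : 0 ≤ r)
    (hcont : ∀ᵐ q ∂(volume.restrict triangleSet), ContinuousOn (Φ q.1 q.2) (Icc (-r) r))
    {x : ℝ → ℝ} (hx : ContinuousOn x (Icc 0 1)) (hxr : ∀ τ ∈ Icc (0 : ℝ) 1, |x τ| ≤ r) :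
    ∀ᵐ t ∂(volume.restrict (Icc (0 : ℝ) 1)),
      AEStronglyMeasurable (fun τ => Φ t τ (x τ)) (volume.restrict (Ioc 0 t)) := by
  refine AEStronglyMeasurable.ae_slice_triangleSet (f := fun q => Φ q.1 q.2 (x q.2)) ?_
  refine ((aemeasurable_restrict_iff_comap_subtype measurableSet_triangleSet).2 ?_)
    |>.aestronglyMeasurable
  have hx_snd : Continuous fun q : triangleSet => x q.1.2 :=
    hx.comp_continuous (continuous_snd.comp continuous_subtype_val) fun q => q.2.2.1
  exact aemeasurable_comp_of_continuousOn_Icc (neg_le_self hr) hΦ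
    ((ae_restrict_iff_subtype measurableSet_triangleSet).1 hcont) hx_snd.aemeasurable
    (ae_of_all _ fun q => abs_le.1 (hxr _ q.2.2.1))

theorem w1pNorm_nonneg (p : ℝ) (g : ℝ → ℝ) : 0 ≤ w1pNorm p g :=
  Real.rpow_nonneg (integral_nonneg fun _ => by positivity) _

namespace InW1p0

variable {p : ℝ} {x g : ℝ → ℝ}

theorem integrableOn (hp : 1 ≤ p) (h : InW1p0 p x g) : IntegrableOn g (Icc 0 1) :=
  h.1.integrable (ENNReal.one_le_ofReal.2 hp)

theorem continuousOn (hp : 1 ≤ p) (h : InW1p0 p x g) : ContinuousOn x (Icc 0 1) := by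
  have hprim := intervalIntegral.continuousOn_primitive_interval (a := 0) (b := 1)
    (by simpa only [uIcc_of_le zero_le_one] using h.integrableOn hp)
  rw [uIcc_of_le zero_le_one] at hprim
  exact hprim.congr h.2

theorem sub {y k : ℝ → ℝ} (hp : 1 ≤ p) (hx : InW1p0 p x g) (hy : InW1p0 p y k) :
    InW1p0 p (fun t => x t - y t) (fun t => g t - k t) := by
  refine ⟨hx.1.sub hy.1, fun t ht => ?_⟩
  have hsub : uIcc 0 t ⊆ Icc (0 : ℝ) 1 := by
    rw [uIcc_of_le ht.1]
    exact Icc_subset_Icc_right ht.2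
  beta_reduce
  rw [hx.2 t ht, hy.2 t ht, intervalIntegral.integral_sub
    ((hx.integrableOn hp).mono_set hsub).intervalIntegrable
    ((hy.integrableOn hp).mono_set hsub).intervalIntegrable]

theorem abs_le_w1pNorm (hp : 1 < p) (h : InW1p0 p x g) :
    ∀ t ∈ Icc (0 : ℝ) 1, |x t| ≤ w1pNorm p g := by
  intro t ht
  have hsub : Ioc 0 t ⊆ Icc (0 : ℝ) 1 := Ioc_subset_Icc_self.trans (Icc_subset_Icc_right ht.2)
  calc |x t| = |∫ τ in Ioc 0 t, g τ| := by rw [h.2 t ht, intervalIntegral.integral_of_le ht.1]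
    _ ≤ ∫ τ in Ioc 0 t, |g τ| := abs_integral_le_integral_abs
    _ ≤ ∫ τ in Icc 0 1, |g τ| :=
      setIntegral_mono_set (h.integrableOn hp.le).abs (ae_of_all _ fun τ => abs_nonneg _)
        hsub.eventuallyLE
    _ ≤ w1pNorm p g := integral_abs_le_integral_abs_rpow_rpow hp h.1

end InW1p0

/-- For `1 < p < ∞`: (a) every `x ∈ W^{1,p}₀[0,1]` satisfies `‖x‖_∞ ≤ ‖x‖_{W^{1,p}₀}`;
(b) if `Φ` satisfies conditions (i)-(iii), then the map `g(x)(t) := ∫₀^t Φ(t,τ,x(τ)) dτ`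
satisfies `‖g(u) - g(v)‖_{L^p} ≤ θ(r)·‖u - v‖_{W^{1,p}₀}` whenever `‖u‖, ‖v‖ ≤ r`. -/
theorem sup_norm_bound_and_lipschitz_estimate
    (p : ℝ) (hp : 1 < p) :
    (∀ x g : ℝ → ℝ, InW1p0 p x g → ∀ t ∈ Icc (0 : ℝ) 1, |x t| ≤ w1pNorm p g) ∧
    ∀ Φ : ℝ → ℝ → ℝ → ℝ, ∀ θ : ℝ → ℝ,
      PhiMeasurable Φ → PhiGrowth p Φ → PhiLipschitz Φ θ →
      ∀ r ∈ Ici (0 : ℝ), ∀ u gu v gv : ℝ → ℝ,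
        InW1p0 p u gu → InW1p0 p v gv → w1pNorm p gu ≤ r → w1pNorm p gv ≤ r →
        (∫ t in Icc (0 : ℝ) 1,
            |(∫ τ in (0 : ℝ)..t, Φ t τ (u τ)) - ∫ τ in (0 : ℝ)..t, Φ t τ (v τ)| ^ p) ^ (1 / p)
          ≤ θ r * (∫ τ in Icc (0 : ℝ) 1, |gu τ - gv τ| ^ p) ^ (1 / p) := by
  refine ⟨fun x g hx => hx.abs_le_w1pNorm hp, ?_⟩
  rintro Φ θ hΦ - ⟨-, hθ, -, hLip⟩ r hr u gu v gv hu hv hur hvr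
  have hbound {x g : ℝ → ℝ} (hx : InW1p0 p x g) (hxr : w1pNorm p g ≤ r) :
      ∀ τ ∈ Icc (0 : ℝ) 1, |x τ| ≤ r := fun τ hτ => (hx.abs_le_w1pNorm hp τ hτ).trans hxr
  have hcont := (hLip r hr).mono fun q hq => continuousOn_Icc_of_abs_sub_le hq
  have hKC : 0 ≤ θ r * w1pNorm p (fun τ => gu τ - gv τ) :=
    mul_nonneg (hθ r hr).1.le (w1pNorm_nonneg _ _)
  refine integral_abs_rpow_rpow_le_of_ae_abs_le (by linarith) hKC ?_
  filter_upwards [hΦ.ae_aestronglyMeasurable_slice hr hcont (hu.continuousOn hp.le) (hbound hu hur),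
    hΦ.ae_aestronglyMeasurable_slice hr hcont (hv.continuousOn hp.le) (hbound hv hvr),
    ae_slice_triangleSet (hLip r hr), self_mem_ae_restrict measurableSet_Icc]
    with t hmu hmv hlt ht
  refine (abs_intervalIntegral_sub_le_of_ae_abs_sub_le ht.1 hKC hmu hmv ?_).trans
    (mul_le_of_le_one_right hKC (by linarith [ht.2]))
  filter_upwards [hlt, self_mem_ae_restrict measurableSet_Ioc] with τ hτ hτt
  have hτ1 : τ ∈ Icc (0 : ℝ) 1 := ⟨hτt.1.le, hτt.2.trans ht.2⟩
  calc |Φ t τ (u τ) - Φ t τ (v τ)| ≤ θ r * |u τ - v τ| :=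
        hτ _ _ (hbound hu hur τ hτ1) (hbound hv hvr τ hτ1)
    _ ≤ θ r * w1pNorm p (fun τ => gu τ - gv τ) := by
        gcongr
        · exact (hθ r hr).1.le
        · exact (hu.sub hp.le hv).abs_le_w1pNorm hp τ hτ1
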